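/- Contiguous relation for monic little q-Jacobi polynomials in α: for n ≥ 1, p̃_n(x; α/q, β | q) = p̃_n(x; α, β | q) + [α q^n (q^n − 1)(β q^n − 1) / ((αβ q^{2n} − 1)(αβ q^{2n} − q))] · p̃_{n−1}(x; α, β | q), as an identity of polynomials in x (assuming the denominators are nonzero). -/

import Mathlib

/-- The q-Pochhammer symbol `(a; q)_m`. -/
noncomputable def qPoch (q a : ℝ) (m : ℕ) : ℝ := ∏ j ∈ Finset.range m, (1 - a * q ^ j)

/-- The monic little q-Jacobi polynomial
`p̃_n(x; α, β | q) = (−1)^n q^{n(n−1)/2} ((αq;q)_n / (αβq^{n+1};q)_n) ₂φ₁(q^{-n}, αβq^{n+1}; αq; q, qx)`. -/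
noncomputable def littleQJacobi (q α β : ℝ) (n : ℕ) (x : ℝ) : ℝ :=
  (-1 : ℝ) ^ n * q ^ (n * (n - 1) / 2) *
    (qPoch q (α * q) n / qPoch q (α * β * q ^ (n + 1)) n) *
    ∑ m ∈ Finset.range (n + 1),
      qPoch q (q ^ (-(n : ℤ))) m * qPoch q (α * β * q ^ (n + 1)) m * (q * x) ^ m /
        (qPoch q (α * q) m * qPoch q q m)

/-!
Both sides are expanded in the basis `(q x)^m / (q; q)_m` and compared coefficientwise. Replacing
`α` by `α / q`, or the degree `N` by `N - 1` (with the prescribed factor), multiplies the `m`-th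
coefficient of `p̃_N(x; α, β | q)` by an explicit rational function of `q^m`, obtained from
`(1 - a) (a q; q)_m = (a; q)_m (1 - a q^m)`. The relation then reduces to the polynomial identity
`(1 - α q^m)(1 - αβ q^{2N}) = (1 - α q^N)(1 - αβ q^{N+m}) + α (1 - β q^N)(q^N - q^m)`.
-/

open Finset

section QPoch

variable {q : ℝ}

theorem qPoch_succ (a : ℝ) (m : ℕ) : qPoch q a (m + 1) = qPoch q a m * (1 - a * q ^ m) :=
  prod_range_succ _ _

theorem one_sub_mul_qPoch_mul (a : ℝ) (m : ℕ) :
    (1 - a) * qPoch q (a * q) m = qPoch q a m * (1 - a * q ^ m) := by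
  rw [← qPoch_succ]
  unfold qPoch
  rw [prod_range_succ']
  simp only [pow_succ', pow_zero, mul_one, mul_assoc]
  exact mul_comm _ _

theorem qPoch_eq_div {a : ℝ} {m : ℕ} (h : a * q ^ m ≠ 1) :
    qPoch q a m = (1 - a) * qPoch q (a * q) m / (1 - a * q ^ m) := by
  rw [eq_div_iff (sub_ne_zero.mpr h.symm), one_sub_mul_qPoch_mul]

theorem qPoch_ne_zero {a : ℝ} (h : ∀ j : ℕ, a * q ^ j ≠ 1) (m : ℕ) : qPoch q a m ≠ 0 :=
  prod_ne_zero_iff.mpr fun j _ hj => h j (by linarith)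

theorem qPoch_mul_pow_ne_zero {a : ℝ} (h : ∀ j : ℕ, a * q ^ j ≠ 1) (s m : ℕ) :
    qPoch q (a * q ^ s) m ≠ 0 :=
  qPoch_ne_zero (fun j => by rw [mul_assoc, ← pow_add]; exact h (s + j)) m

theorem qPoch_zpow_neg_eq_zero (hq : q ≠ 0) {n m : ℕ} (h : n < m) :
    qPoch q (q ^ (-(n : ℤ))) m = 0 :=
  prod_eq_zero (mem_range.mpr h) <| by
    rw [zpow_neg, zpow_natCast, inv_mul_cancel₀ (pow_ne_zero n hq), sub_self]

theorem qPoch_zpow_neg_succ_mul (hq : q ≠ 0) (n m : ℕ) :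
    qPoch q (q ^ (-((n + 1 : ℕ) : ℤ))) m * (q ^ (n + 1) - q ^ m)
      = (q ^ (n + 1) - 1) * qPoch q (q ^ (-(n : ℤ))) m := by
  have hshift : q ^ (-((n + 1 : ℕ) : ℤ)) * q = q ^ (-(n : ℤ)) := by
    rw [← zpow_add_one₀ hq]; push_cast; ring_nf
  have hrec := one_sub_mul_qPoch_mul (q := q) (q ^ (-((n + 1 : ℕ) : ℤ))) m
  rw [hshift] at hrec
  have hinv : q ^ (n + 1) * q ^ (-((n + 1 : ℕ) : ℤ)) = 1 := by
    rw [zpow_neg, zpow_natCast, mul_inv_cancel₀ (pow_ne_zero _ hq)]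
  linear_combination (-(q ^ (n + 1))) * hrec
    + (qPoch q (q ^ (-((n + 1 : ℕ) : ℤ))) m * q ^ m - qPoch q (q ^ (-(n : ℤ))) m) * hinv

end QPoch

noncomputable def littleQJacobiCoeff (q α β : ℝ) (n m : ℕ) : ℝ :=
  (-1 : ℝ) ^ n * q ^ (n * (n - 1) / 2) *
    (qPoch q (α * q) n / qPoch q (α * β * q ^ (n + 1)) n) *
    (qPoch q (q ^ (-(n : ℤ))) m * qPoch q (α * β * q ^ (n + 1)) m / qPoch q (α * q) m)

section LittleQJacobi

variable {q : ℝ} (α β : ℝ)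

theorem littleQJacobiCoeff_eq_zero_of_lt (hq : q ≠ 0) {n m : ℕ} (h : n < m) :
    littleQJacobiCoeff q α β n m = 0 := by
  rw [littleQJacobiCoeff, qPoch_zpow_neg_eq_zero hq h, zero_mul, zero_div, mul_zero]

theorem littleQJacobi_eq_sum (hq : q ≠ 0) {n M : ℕ} (hM : n < M) (x : ℝ) :
    littleQJacobi q α β n x
      = ∑ m ∈ range M, littleQJacobiCoeff q α β n m * ((q * x) ^ m / qPoch q q m) := by
  rw [← sum_subset (range_subset_range.mpr hM) fun m _ hm => by
    rw [littleQJacobiCoeff_eq_zero_of_lt α β hq (by simpa using hm), zero_mul]]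
  rw [littleQJacobi, mul_sum]
  refine sum_congr rfl fun m _ => ?_
  rw [littleQJacobiCoeff]
  ring

theorem littleQJacobiCoeff_div_q_mul (hq : q ≠ 0) (hα : ∀ j : ℕ, α * q ^ j ≠ 1)
    (hαβ : ∀ j : ℕ, α * β * q ^ j ≠ 1) (n m : ℕ) :
    littleQJacobiCoeff q (α / q) β n m * ((1 - α * q ^ n) * (1 - α * β * q ^ (n + m)))
      = littleQJacobiCoeff q α β n m * ((1 - α * q ^ m) * (1 - α * β * q ^ (2 * n))) := by
  have hα_q : α / q * q = α := div_mul_cancel₀ α hq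
  have hαβ_q : α / q * β * q ^ (n + 1) = α * β * q ^ n := by
    rw [pow_succ]; field_simp
  have hαβ_shift (j : ℕ) : α * β * q ^ n * q ^ j = α * β * q ^ (n + j) := by ring
  have hαβ_succ : α * β * q ^ n * q = α * β * q ^ (n + 1) := by ring
  have hαβ_pow (j : ℕ) : α * β * q ^ n * q ^ j ≠ 1 := by rw [hαβ_shift]; exact hαβ _
  simp only [littleQJacobiCoeff, hα_q, hαβ_q, qPoch_eq_div (hα n), qPoch_eq_div (hα m),
    qPoch_eq_div (hαβ_pow n), qPoch_eq_div (hαβ_pow m), hαβ_succ, hαβ_shift, ← two_mul]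
  have : qPoch q (α * q) m ≠ 0 := by simpa using qPoch_mul_pow_ne_zero hα 1 m
  have := qPoch_mul_pow_ne_zero hαβ (n + 1) n
  have : 1 - α ≠ 0 := sub_ne_zero.mpr (by simpa using (hα 0).symm)
  have : 1 - α * q ^ n ≠ 0 := sub_ne_zero.mpr (hα n).symm
  have : 1 - α * q ^ m ≠ 0 := sub_ne_zero.mpr (hα m).symm
  have : 1 - α * q ^ n * β ≠ 0 := by rw [mul_right_comm]; exact sub_ne_zero.mpr (hαβ n).symm
  have : 1 - α * β * q ^ (2 * n) ≠ 0 := sub_ne_zero.mpr (hαβ _).symm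
  have : 1 - α * β * q ^ (n + m) ≠ 0 := sub_ne_zero.mpr (hαβ _).symm
  field_simp

theorem littleQJacobiCoeff_succ_mul (hq : q ≠ 0) (hα : ∀ j : ℕ, α * q ^ j ≠ 1)
    (hαβ : ∀ j : ℕ, α * β * q ^ j ≠ 1) (n m : ℕ) :
    α * q ^ (n + 1) * (q ^ (n + 1) - 1) * (β * q ^ (n + 1) - 1) /
        ((α * β * q ^ (2 * (n + 1)) - 1) * (α * β * q ^ (2 * (n + 1)) - q)) *
        littleQJacobiCoeff q α β n m * ((1 - α * q ^ (n + 1)) * (1 - α * β * q ^ (n + 1 + m)))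
      = littleQJacobiCoeff q α β (n + 1) m *
          (α * (1 - β * q ^ (n + 1)) * (q ^ (n + 1) - q ^ m)) := by
  have hsign : (-1 : ℝ) ^ (n + 1) * q ^ ((n + 1) * (n + 1 - 1) / 2)
      = -((-1) ^ n * q ^ (n * (n - 1) / 2)) * q ^ n := by
    rw [Nat.triangle_succ, pow_add, pow_succ]; ring
  have hαβ_shift (j : ℕ) : α * β * q ^ (n + 1) * q ^ j = α * β * q ^ (n + 1 + j) := by ring
  have hαβ_succ : α * β * q ^ (n + 1) * q = α * β * q ^ (n + 1 + 1) := by ring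
  have hαβ_pow (j : ℕ) : α * β * q ^ (n + 1) * q ^ j ≠ 1 := by
    rw [hαβ_shift]; exact hαβ _
  have hαβ_double : α * β * q ^ (n + 1 + 1) * q ^ n = α * β * q ^ (2 * (n + 1)) := by ring
  simp only [littleQJacobiCoeff, hsign, qPoch_succ, qPoch_eq_div (hαβ_pow n),
    qPoch_eq_div (hαβ_pow m), hαβ_succ, hαβ_shift, hαβ_double]
  have : qPoch q (α * q) m ≠ 0 := by simpa using qPoch_mul_pow_ne_zero hα 1 m
  have := qPoch_mul_pow_ne_zero hαβ (n + 1 + 1) n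
  have : α * β * q ^ (2 * (n + 1)) - 1 ≠ 0 := sub_ne_zero.mpr (hαβ _)
  have : α * β * q ^ (2 * n + 1) - 1 ≠ 0 := sub_ne_zero.mpr (hαβ _)
  have : 1 - α * β * q ^ (2 * (n + 1)) ≠ 0 := sub_ne_zero.mpr (hαβ _).symm
  have : 1 - α * β * q ^ (n + 1 + m) ≠ 0 := sub_ne_zero.mpr (hαβ _).symm
  have : 1 - α * q ^ (n + 1) * β ≠ 0 := by
    rw [mul_right_comm]; exact sub_ne_zero.mpr (hαβ _).symm
  have hq_factor : α * β * q ^ (2 * (n + 1)) - q = q * (α * β * q ^ (2 * n + 1) - 1) := by ring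
  rw [hq_factor]
  field_simp
  linear_combination q ^ (n + 1) * α * (1 - α * q ^ (n + 1)) * (1 - β * q ^ (n + 1)) *
      (α * β * q ^ (2 * (n + 1)) - 1) * (α * β * q ^ (2 * n + 1) - 1) *
      qPoch q (α * q) n * qPoch q (α * β * q ^ (n + 1 + 1)) m * qPoch_zpow_neg_succ_mul hq n m

theorem littleQJacobiCoeff_div_q (hq : q ≠ 0) (hα : ∀ j : ℕ, α * q ^ j ≠ 1)
    (hαβ : ∀ j : ℕ, α * β * q ^ j ≠ 1) (n m : ℕ) :
    littleQJacobiCoeff q (α / q) β (n + 1) m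
      = littleQJacobiCoeff q α β (n + 1) m
        + α * q ^ (n + 1) * (q ^ (n + 1) - 1) * (β * q ^ (n + 1) - 1) /
            ((α * β * q ^ (2 * (n + 1)) - 1) * (α * β * q ^ (2 * (n + 1)) - q)) *
          littleQJacobiCoeff q α β n m := by
  have hD : (1 - α * q ^ (n + 1)) * (1 - α * β * q ^ (n + 1 + m)) ≠ 0 :=
    mul_ne_zero (sub_ne_zero.mpr (hα _).symm) (sub_ne_zero.mpr (hαβ _).symm)
  apply mul_right_cancel₀ hD
  linear_combination littleQJacobiCoeff_div_q_mul α β hq hα hαβ (n + 1) m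
    - littleQJacobiCoeff_succ_mul α β hq hα hαβ n m

end LittleQJacobi

theorem littleQJacobi_shift_alpha_general (q α β : ℝ) (n : ℕ)
    (hq : 0 < q)
    (hα : ∀ m : ℕ, α * q ^ m ≠ 1) (hαβ : ∀ m : ℕ, α * β * q ^ m ≠ 1) :
    ∀ x : ℝ,
      littleQJacobi q (α / q) β n x
        = littleQJacobi q α β n x
          + (α * q ^ n * (q ^ n - 1) * (β * q ^ n - 1) /
              ((α * β * q ^ (2 * n) - 1) * (α * β * q ^ (2 * n) - q))) *
            littleQJacobi q α β (n - 1) x := by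
  intro x
  cases n with
  | zero => simp [littleQJacobi, qPoch] -- the factor in front of `p̃_{0-1} = p̃_0` vanishes
  | succ n =>
    have hq0 := hq.ne'
    rw [Nat.add_sub_cancel, littleQJacobi_eq_sum (α / q) β hq0 (Nat.lt_succ_self (n + 1)),
      littleQJacobi_eq_sum α β hq0 (Nat.lt_succ_self (n + 1)),
      littleQJacobi_eq_sum α β hq0 (by omega : n < n + 2), mul_sum, ← sum_add_distrib]
    refine sum_congr rfl fun m _ => ?_
    rw [littleQJacobiCoeff_div_q α β hq0 hα hαβ]
    ring

/-- Contiguous relation for monic little q-Jacobi polynomials in α. -/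
theorem littleQJacobi_shift_alpha (q α β : ℝ) (n : ℕ)
    (hq : 0 < q) (hq1 : q < 1) (hn : 1 ≤ n)
    (hα : ∀ m : ℕ, α * q ^ m ≠ 1) (hαβ : ∀ m : ℕ, α * β * q ^ m ≠ 1) :
    ∀ x : ℝ,
      littleQJacobi q (α / q) β n x
        = littleQJacobi q α β n x
          + (α * q ^ n * (q ^ n - 1) * (β * q ^ n - 1) /
              ((α * β * q ^ (2 * n) - 1) * (α * β * q ^ (2 * n) - q))) *
            littleQJacobi q α β (n - 1) x :=
  littleQJacobi_shift_alpha_general q α β n hq hα hαβ
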